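/- If G = G₁ *_H G₂ is a nontrivial injective amalgamated free product, then the subgroup j₁(G₁) ⊆ G has infinite index in G. -/

import Mathlib

/-!
Pick `g₁ ∈ G true` and `g₂ ∈ G false` outside the images of `H`. For `k > 0` the alternating word
`g₂ g₁ g₂ g₁ ⋯` of length `2k` is reduced and does not start in `G true`; if
`(g₂ g₁)ᵏ = g` with `g ∈ G true`, then prepending `g⁻¹` (or absorbing `g` into `H`, if `g ∈ H`)
gives a nonempty reduced word representing an element of `H`, contradicting the normal form
theorem. So no positive power of `g₂ g₁` lies in `G true`, which forces infinite index.
-/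

open Function

theorem Subgroup.index_eq_zero_of_forall_pow_notMem {G : Type*} [Group G] {K : Subgroup G}
    {a : G} (h : ∀ n, 0 < n → a ^ n ∉ K) : K.index = 0 := by
  by_contra hK
  obtain ⟨n, hn, -, hmem⟩ := K.exists_pow_mem_of_index_ne_zero hK a
  exact h n hn hmem

theorem Monoid.CoprodI.Word.cons_ne_empty {ι : Type*} {M : ι → Type*} [∀ i, Monoid (M i)]
    {i : ι} {m : M i} {w : Word M} (hmw : w.fstIdx ≠ some i) (h1 : m ≠ 1) :
    cons m w hmw h1 ≠ empty := by
  intro h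
  have := congrArg fstIdx h
  simp [fstIdx, empty] at this

namespace Monoid.PushoutI

open CoprodI

variable {ι H : Type*} {G : ι → Type*} [∀ i, Group (G i)] [Group H] {φ : ∀ i, H →* G i}

theorem ne_one_of_notMem_range {i : ι} {g : G i} (hg : g ∉ (φ i).range) : g ≠ 1 :=
  (ne_of_mem_of_not_mem (one_mem _) hg).symm

theorem Reduced.cons {i : ι} {g : G i} {w : Word G} (hw : Reduced φ w)
    (hg : g ∉ (φ i).range) (hfst : w.fstIdx ≠ some i) :
    Reduced φ (Word.cons g w hfst (ne_one_of_notMem_range hg)) := by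
  intro x hx
  rcases List.mem_cons.1 hx with rfl | hx
  · exact hg
  · exact hw x hx

theorem Reduced.ofCoprodI_prod_notMem_range (hφ : ∀ i, Injective (φ i)) {i : ι}
    {w : Word G} (hw : Reduced φ w) (hne : w ≠ .empty) (hfst : w.fstIdx ≠ some i) :
    ofCoprodI w.prod ∉ (of (φ := φ) i).range := by
  rintro ⟨g, hg⟩
  by_cases hgφ : g ∈ (φ i).range
  · obtain ⟨h, rfl⟩ := hgφ
    exact hne (hw.eq_empty_of_mem_range hφ ⟨h, by rw [← hg, of_apply_eq_base]⟩)
  · have hg' : g⁻¹ ∉ (φ i).range := inv_mem_iff.not.2 hgφ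
    refine Word.cons_ne_empty hfst _ ((hw.cons hg' hfst).eq_empty_of_mem_range hφ ⟨1, ?_⟩)
    rw [Word.prod_cons, map_mul, ofCoprodI_of, ← hg, ← map_mul, inv_mul_cancel, map_one, map_one]

theorem exists_reduced_word_prod_eq_pow {i j : ι} (hij : i ≠ j) {g₁ : G i} {g₂ : G j}
    (hg₁ : g₁ ∉ (φ i).range) (hg₂ : g₂ ∉ (φ j).range) (k : ℕ) :
    ∃ w : Word G, Reduced φ w ∧ ofCoprodI w.prod = (of (φ := φ) j g₂ * of i g₁) ^ k ∧
      w.fstIdx ≠ some i ∧ (k ≠ 0 → w ≠ .empty) := by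
  induction k with
  | zero =>
    exact ⟨.empty, fun _ h => (List.not_mem_nil h).elim, by simp,
      by simp [Word.fstIdx, Word.empty], fun h => (h rfl).elim⟩
  | succ k ih =>
    obtain ⟨w, hw, hprod, hfst, -⟩ := ih
    have hfst₁ : (Word.cons g₁ w hfst (ne_one_of_notMem_range hg₁)).fstIdx ≠ some j := by
      simpa [Word.fstIdx_cons] using hij
    refine ⟨_, (hw.cons hg₁ hfst).cons hg₂ hfst₁, ?_, by simpa [Word.fstIdx_cons] using hij.symm,
      fun _ => Word.cons_ne_empty _ _⟩
    rw [Word.prod_cons, Word.prod_cons, map_mul, map_mul, ofCoprodI_of, ofCoprodI_of, hprod,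
      pow_succ', mul_assoc]

theorem of_mul_of_pow_notMem_range (hφ : ∀ i, Injective (φ i)) {i j : ι} (hij : i ≠ j) {g₁ : G i}
    {g₂ : G j} (hg₁ : g₁ ∉ (φ i).range) (hg₂ : g₂ ∉ (φ j).range) {k : ℕ} (hk : k ≠ 0) :
    (of (φ := φ) j g₂ * of i g₁) ^ k ∉ (of (φ := φ) i).range := by
  obtain ⟨w, hw, hprod, hfst, hne⟩ := exists_reduced_word_prod_eq_pow hij hg₁ hg₂ k
  exact hprod ▸ hw.ofCoprodI_prod_notMem_range hφ (hne hk) hfst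

end Monoid.PushoutI

/-- If `G = G₁ *_H G₂` is a nontrivial injective amalgamated free product, then the subgroup
`j₁(G₁) ⊆ G` has infinite index in `G` (index `0` in Mathlib's convention). -/
theorem amalgamated_free_product_infinite_index
    {H : Type*} {G : Bool → Type*} [∀ b, Group (G b)] [Group H]
    (φ : ∀ b, H →* G b) (hφ : ∀ b, Function.Injective (φ b))
    (hnontriv : ∀ b, ¬ Function.Bijective (φ b)) :
    (Monoid.PushoutI.of (φ := φ) true).range.index = 0 := by
  have hproper : ∀ b, ∃ g : G b, g ∉ (φ b).range := fun b =>
    not_forall.mp fun hsurj => hnontriv b ⟨hφ b, hsurj⟩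
  obtain ⟨g₁, hg₁⟩ := hproper true
  obtain ⟨g₂, hg₂⟩ := hproper false
  exact Subgroup.index_eq_zero_of_forall_pow_notMem fun _ hk =>
    Monoid.PushoutI.of_mul_of_pow_notMem_range hφ (by decide) hg₁ hg₂ hk.ne'
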